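/- arXiv:1602.08588 — 6 statements merged into one kernel-verified Lean document; each statement's English description precedes it below -/
import Mathlib

section
/- Let A, B ∈ ℝ^{n×n} be symmetric matrices. Then there exist a diagonal matrix Θ = diag(θ₁,…,θₙ) with all θⱼ ≥ 0 and an orthogonal matrix U ∈ ℝ^{2n×2n} whose columns satisfy u_{n+j} = J u_j for all j = 1,…,n (where J = [[0, -Iₙ],[Iₙ, 0]]), such that the symmetric matrix [[A, B],[B, -A]] equals U · diag(Θ, -Θ) · Uᵀ. -/
/-!
Let `T` be the operator of `M = [[A, B], [B, -A]]`. It is symmetric, and it anticommutes with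
the orthogonal complex structure `J`, so `J` carries a `θ`-eigenvector of `T` to a
`(-θ)`-eigenvector. Hence `T` has a unit eigenvector `u` with eigenvalue `θ ≥ 0` (replace `u` by
`J u` if needed), the plane `span {u, J u}` and its orthogonal complement are invariant under
both `T` and `J`, and induction on the dimension gives orthonormal eigenvectors
`u₁, …, uₙ, J u₁, …, J uₙ` with eigenvalues `θ₁, …, θₙ, -θ₁, …, -θₙ`: the columns of `U`.
-/

open Matrix Module RealInnerProductSpace Submodule WithLp

section InnerProductSpace

variable {V : Type*} [NormedAddCommGroup V] [InnerProductSpace ℝ V]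

theorem Submodule.mapsTo_orthogonal {A B : V →ₗ[ℝ] V} (hAB : ∀ x y, ⟪A x, y⟫ = ⟪x, B y⟫)
    {K : Submodule ℝ V} (hK : ∀ k ∈ K, B k ∈ K) : ∀ w ∈ Kᗮ, A w ∈ Kᗮ := by
  intro w hw k hk
  rw [real_inner_comm, hAB, real_inner_comm]
  exact hw _ (hK k hk)

theorem Submodule.mapsTo_span_pair {R M : Type*} [Semiring R] [AddCommMonoid M] [Module R M]
    {f : M →ₗ[R] M} {a b : M}
    (ha : f a ∈ span R {a, b}) (hb : f b ∈ span R {a, b}) :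
    ∀ x ∈ span R {a, b}, f x ∈ span R {a, b} := by
  intro x hx
  have : span R {a, b} ≤ (span R {a, b}).comap f := by
    rw [span_le]
    rintro _ (rfl | rfl)
    exacts [ha, hb]
  exact this hx

theorem orthonormal_finCons {k : ℕ} {u : V} {f : Fin k → V} (hu : ‖u‖ = 1) (hf : Orthonormal ℝ f)
    (huf : ∀ i, ⟪u, f i⟫ = 0) : Orthonormal ℝ (Fin.cons u f : Fin (k + 1) → V) := by
  rw [orthonormal_iff_ite] at hf ⊢
  intro i j
  cases i using Fin.cases <;> cases j using Fin.cases <;>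
    simp [hu, huf, real_inner_comm u, hf, Fin.succ_ne_zero, (Fin.succ_ne_zero _).symm]

/-- The abstract setting: `T` stands for `[[A, B], [B, -A]]` and `J` for the symplectic matrix. -/
structure IsAnticommutingPair (T J : V →ₗ[ℝ] V) : Prop where
  isSymmetric : T.IsSymmetric
  inner_map_map : ∀ x y, ⟪J x, J y⟫ = ⟪x, y⟫
  map_map : ∀ x, J (J x) = -x
  anticomm : ∀ x, T (J x) = -J (T x)

namespace IsAnticommutingPair

variable {T J : V →ₗ[ℝ] V}

theorem inner_map_left_eq_neg (h : IsAnticommutingPair T J) (x y : V) :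
    ⟪J x, y⟫ = -⟪x, J y⟫ := by
  have := h.inner_map_map x (J y)
  rw [h.map_map, inner_neg_right] at this
  linarith

theorem inner_map_self_eq_zero (h : IsAnticommutingPair T J) (x : V) : ⟪x, J x⟫ = 0 := by
  have := h.inner_map_left_eq_neg x x
  rw [real_inner_comm] at this
  linarith

theorem orthonormal_sumElim (h : IsAnticommutingPair T J) {ι : Type*} {f : ι → V}
    (hf : Orthonormal ℝ f) (hfJ : ∀ i j, ⟪f i, J (f j)⟫ = 0) :
    Orthonormal ℝ (Sum.elim f (J ∘ f)) := by
  classical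
  rw [orthonormal_iff_ite] at hf ⊢
  rintro (i | i) (j | j) <;> simp [hf, hfJ, h.inner_map_map, real_inner_comm (f _) (J _)]

theorem norm_map (h : IsAnticommutingPair T J) (x : V) : ‖J x‖ = ‖x‖ := by
  rw [norm_eq_sqrt_real_inner, h.inner_map_map, ← norm_eq_sqrt_real_inner]

theorem map_eigenvector (h : IsAnticommutingPair T J) {u : V} {θ : ℝ} (hu : T u = θ • u) :
    T (J u) = (-θ) • J u := by
  rw [h.anticomm, hu, map_smul, neg_smul]

theorem exists_unit_eigenvector_nonneg [FiniteDimensional ℝ V] [Nontrivial V]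
    (h : IsAnticommutingPair T J) :
    ∃ (u : V) (θ : ℝ), 0 ≤ θ ∧ ‖u‖ = 1 ∧ T u = θ • u := by
  let i : Fin (finrank ℝ V) := ⟨0, finrank_pos⟩
  set v := h.isSymmetric.eigenvectorBasis rfl i
  set μ := h.isSymmetric.eigenvalues rfl i
  have hv : ‖v‖ = 1 := (h.isSymmetric.eigenvectorBasis rfl).orthonormal.1 i
  have hTv : T v = μ • v := h.isSymmetric.apply_eigenvectorBasis rfl i
  rcases le_or_gt 0 μ with hμ | hμ
  · exact ⟨v, μ, hμ, hv, hTv⟩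
  · refine ⟨J v, -μ, by linarith, ?_, h.map_eigenvector hTv⟩
    rw [h.norm_map, hv]

theorem restrict (h : IsAnticommutingPair T J) {W : Submodule ℝ V} (hTW : ∀ w ∈ W, T w ∈ W)
    (hJW : ∀ w ∈ W, J w ∈ W) : IsAnticommutingPair (T.restrict hTW) (J.restrict hJW) where
  isSymmetric := h.isSymmetric.restrict_invariant hTW
  inner_map_map x y := h.inner_map_map x y
  map_map x := Subtype.ext (h.map_map x)
  anticomm x := Subtype.ext (h.anticomm x)

theorem mapsTo_orthogonal_span_pair (h : IsAnticommutingPair T J) {u : V} {θ : ℝ}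
    (hu : T u = θ • u) :
    (∀ w ∈ (span ℝ {u, J u})ᗮ, T w ∈ (span ℝ {u, J u})ᗮ) ∧
      ∀ w ∈ (span ℝ {u, J u})ᗮ, J w ∈ (span ℝ {u, J u})ᗮ := by
  have hmem_u : u ∈ span ℝ {u, J u} := subset_span (by simp)
  have hmem_Ju : J u ∈ span ℝ {u, J u} := subset_span (by simp)
  constructor
  · refine mapsTo_orthogonal h.isSymmetric (mapsTo_span_pair ?_ ?_)
    · rw [hu]; exact smul_mem _ _ hmem_u
    · rw [h.map_eigenvector hu]; exact smul_mem _ _ hmem_Ju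
  · have hJ_adj (x y : V) : ⟪J x, y⟫ = ⟪x, (-J) y⟫ := by
      rw [h.inner_map_left_eq_neg, LinearMap.neg_apply, inner_neg_right]
    refine mapsTo_orthogonal hJ_adj (mapsTo_span_pair ?_ ?_)
    · exact neg_mem hmem_Ju
    · rw [LinearMap.neg_apply, h.map_map, neg_neg]; exact hmem_u

theorem finrank_orthogonal_span_pair [FiniteDimensional ℝ V] (h : IsAnticommutingPair T J)
    {u : V} (hu : ‖u‖ = 1) : finrank ℝ (span ℝ {u, J u})ᗮ + 2 = finrank ℝ V := by
  have hon : Orthonormal ℝ ![u, J u] := by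
    rw [orthonormal_iff_ite]
    intro i j
    fin_cases i <;> fin_cases j <;>
      simp [hu, h.norm_map, h.inner_map_self_eq_zero, real_inner_comm u (J u)]
  have hspan : finrank ℝ (span ℝ {u, J u}) = 2 := by
    rw [show ({u, J u} : Set V) = Set.range ![u, J u] by simp [Set.pair_comm],
      finrank_span_eq_card hon.linearIndependent, Fintype.card_fin]
  rw [← (span ℝ {u, J u}).finrank_add_finrank_orthogonal, hspan, add_comm]

theorem exists_orthonormal_eigenvectors [FiniteDimensional ℝ V] (h : IsAnticommutingPair T J) :
    ∃ (k : ℕ) (θ : Fin k → ℝ) (f : Fin k → V), finrank ℝ V = 2 * k ∧ (∀ i, 0 ≤ θ i) ∧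
      Orthonormal ℝ f ∧ (∀ i j, ⟪f i, J (f j)⟫ = 0) ∧ ∀ i, T (f i) = θ i • f i := by
  induction hd : finrank ℝ V using Nat.strong_induction_on generalizing V with
  | _ d ih =>
  rcases subsingleton_or_nontrivial V with hV | hV
  · exact ⟨0, Fin.elim0, Fin.elim0, by rw [← hd, finrank_zero_of_subsingleton], nofun,
      ⟨nofun, nofun⟩, nofun, nofun⟩
  obtain ⟨u, θ, hθ, hu, hTu⟩ := h.exists_unit_eigenvector_nonneg
  obtain ⟨hTW, hJW⟩ := h.mapsTo_orthogonal_span_pair hTu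
  have hW := h.finrank_orthogonal_span_pair hu
  set W := (span ℝ {u, J u})ᗮ
  obtain ⟨k, θ', f', hk, hθ', hf', hf'J, hTf'⟩ :=
    ih (finrank ℝ W) (by omega) (h.restrict hTW hJW) rfl
  have hu_perp (w : W) : ⟪u, w⟫ = 0 := w.2 u (subset_span (by simp))
  have hJu_perp (w : W) : ⟪J u, w⟫ = 0 := w.2 (J u) (subset_span (by simp))
  refine ⟨k + 1, Fin.cons θ θ', Fin.cons u (W.subtype ∘ f'), by omega, ?_, ?_, ?_, ?_⟩
  · intro i
    cases i using Fin.cases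
    exacts [hθ, hθ' _]
  · exact orthonormal_finCons hu (hf'.comp_linearIsometry W.subtypeₗᵢ) fun i => hu_perp (f' i)
  · intro i j
    cases i using Fin.cases <;> cases j using Fin.cases
    · exact h.inner_map_self_eq_zero u
    · exact hu_perp (J.restrict hJW (f' _))
    · simpa [real_inner_comm] using hJu_perp (f' _)
    · exact hf'J _ _
  · intro i
    cases i using Fin.cases
    · exact hTu
    · exact congrArg Subtype.val (hTf' _)

theorem of_continuousLinearMap {E : Type*} [NormedAddCommGroup E] [InnerProductSpace ℝ E]
    [CompleteSpace E] {T J : E →L[ℝ] E} (hT : IsSelfAdjoint T) (hJ : star J * J = 1)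
    (hJJ : J * J = -1) (hTJ : T * J = -(J * T)) :
    IsAnticommutingPair (T : E →ₗ[ℝ] E) (J : E →ₗ[ℝ] E) where
  isSymmetric := hT.isSymmetric
  inner_map_map x y := by
    change ⟪J x, J y⟫ = ⟪x, y⟫
    rw [← ContinuousLinearMap.adjoint_inner_right, ← ContinuousLinearMap.star_eq_adjoint]
    exact congr(⟪x, $hJ y⟫)
  map_map x := congr($hJJ x)
  anticomm x := congr($hTJ x)

theorem of_matrix {ι : Type*} [Fintype ι] [DecidableEq ι] {M J : Matrix ι ι ℝ}
    (hM : M.IsHermitian) (hJ : Jᴴ * J = 1) (hJJ : J * J = -1) (hMJ : M * J = -(J * M)) :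
    IsAnticommutingPair (toEuclideanLin M) (toEuclideanLin J) := by
  let Φ := toEuclideanCLM (n := ι) (𝕜 := ℝ)
  exact of_continuousLinearMap (T := Φ M) (J := Φ J) (hM.isSelfAdjoint.map Φ)
    (by rw [← map_star, ← map_mul, star_eq_conjTranspose, hJ, map_one])
    (by rw [← map_mul, hJJ, map_neg, map_one])
    (by rw [← map_mul, hMJ, map_neg, map_mul])

end IsAnticommutingPair

end InnerProductSpace

namespace Matrix

variable {ι : Type*} [Fintype ι] [DecidableEq ι]

theorem mul_transpose_self_eq_one_of_orthonormal {g : ι → EuclideanSpace ℝ ι}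
    (hg : Orthonormal ℝ g) : (of fun a => ofLp (g a)) * (of fun a => ofLp (g a))ᵀ = 1 := by
  ext a b
  rw [mul_apply', one_apply, ← (orthonormal_iff_ite.mp hg) a b,
    EuclideanSpace.inner_eq_star_dotProduct, dotProduct_comm]
  rfl

theorem eq_transpose_mul_diagonal_mul_of_orthonormal {M : Matrix ι ι ℝ}
    {g : ι → EuclideanSpace ℝ ι} {d : ι → ℝ} (hg : Orthonormal ℝ g)
    (hM : ∀ a, M *ᵥ ofLp (g a) = d a • ofLp (g a)) :
    M = (of fun a => ofLp (g a))ᵀ * diagonal d * of fun a => ofLp (g a) := by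
  set C : Matrix ι ι ℝ := of fun a => ofLp (g a)
  have hCC : Cᵀ * C = 1 := mul_eq_one_comm.mp (mul_transpose_self_eq_one_of_orthonormal hg)
  have hMC : M * Cᵀ = Cᵀ * diagonal d := by
    ext i a
    rw [mul_diagonal, mul_comm]
    exact congrFun (hM a) i
  calc M = M * (Cᵀ * C) := by rw [hCC, Matrix.mul_one]
    _ = Cᵀ * diagonal d * C := by rw [← Matrix.mul_assoc, hMC]

theorem fromBlocks_mul_J {l R : Type*} [Fintype l] [DecidableEq l] [CommRing R]
    (A B : Matrix l l R) : fromBlocks A B B (-A) * J l R = -(J l R * fromBlocks A B B (-A)) := by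
  simp [J, fromBlocks_multiply, fromBlocks_neg]

theorem conjTranspose_J_mul_J (l : Type*) [Fintype l] [DecidableEq l] :
    (J l ℝ)ᴴ * J l ℝ = 1 := by
  rw [conjTranspose_eq_transpose_of_trivial, J_transpose, Matrix.neg_mul, J_squared, neg_neg]

end Matrix

/-- Hamiltonian-structured eigendecomposition of `[[A, B],[B, -A]]` for symmetric `A, B`. -/
theorem stmt0 (n : ℕ) (A B : Matrix (Fin n) (Fin n) ℝ)
    (hA : Aᵀ = A) (hB : Bᵀ = B) :
    ∃ (θ : Fin n → ℝ) (U : Matrix (Fin n ⊕ Fin n) (Fin n ⊕ Fin n) ℝ),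
      (∀ j, 0 ≤ θ j) ∧
      Uᵀ * U = 1 ∧
      (∀ j : Fin n, Uᵀ (Sum.inr j) =
        (Matrix.fromBlocks (0 : Matrix (Fin n) (Fin n) ℝ) (-1) 1 0).mulVec (Uᵀ (Sum.inl j))) ∧
      Matrix.fromBlocks A B B (-A) =
        U * Matrix.fromBlocks (Matrix.diagonal θ) 0 0 (-(Matrix.diagonal θ)) * Uᵀ := by
  have hA' : A.IsHermitian := isHermitian_iff_isSymm.2 hA
  have hM : (fromBlocks A B B (-A)).IsHermitian :=
    hA'.fromBlocks (by rw [conjTranspose_eq_transpose_of_trivial, hB]) hA'.neg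
  have hpair := IsAnticommutingPair.of_matrix hM (conjTranspose_J_mul_J _) (J_squared _ _)
    (fromBlocks_mul_J A B)
  obtain ⟨k, θ, f, hk, hθ, hf, hfJ, hTf⟩ := hpair.exists_orthonormal_eigenvectors
  obtain rfl : n = k := by
    rw [finrank_euclideanSpace, Fintype.card_sum, Fintype.card_fin] at hk; omega
  set g := Sum.elim f (toEuclideanLin (J (Fin n) ℝ) ∘ f)
  have hg : Orthonormal ℝ g := hpair.orthonormal_sumElim hf hfJ
  have hMg (a) : fromBlocks A B B (-A) *ᵥ ofLp (g a) = Sum.elim θ (-θ) a • ofLp (g a) := by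
    rcases a with j | j
    · exact congr(ofLp $(hTf j))
    · exact congr(ofLp $(hpair.map_eigenvector (hTf j)))
  refine ⟨θ, (of fun a => ofLp (g a))ᵀ, hθ, mul_transpose_self_eq_one_of_orthonormal hg,
    fun j => rfl, ?_⟩
  rw [diagonal_neg, fromBlocks_diagonal, transpose_transpose]
  exact eq_transpose_mul_diagonal_mul_of_orthonormal hg hMg
end

section
/- Let A, B ∈ ℝ^{n×n} be symmetric, and suppose [[A, B],[B, -A]] = U · diag(Θ, -Θ) · Uᵀ where Θ = diag(θ₁,…,θₙ) with θⱼ ≥ 0 and U is orthogonal with columns satisfying u_{n+j} = J u_j for j = 1,…,n (J = [[0, -Iₙ],[Iₙ, 0]]). Then [[B, -A],[-A, -B]] = U · [[0, -Θ],[-Θ, 0]] · Uᵀ. -/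
open Matrix

/-- If `[[A,B],[B,-A]] = U diag(Θ,-Θ) Uᵀ` with the structured orthogonal `U`, then
`[[B,-A],[-A,-B]] = U [[0,-Θ],[-Θ,0]] Uᵀ`. -/
theorem stmt1 (n : ℕ) (A B : Matrix (Fin n) (Fin n) ℝ)
    (hA : Aᵀ = A) (hB : Bᵀ = B)
    (θ : Fin n → ℝ) (hθ : ∀ j, 0 ≤ θ j)
    (U : Matrix (Fin n ⊕ Fin n) (Fin n ⊕ Fin n) ℝ)
    (hU : Uᵀ * U = 1)
    (hcol : ∀ j : Fin n, Uᵀ (Sum.inr j) =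
      (Matrix.fromBlocks (0 : Matrix (Fin n) (Fin n) ℝ) (-1) 1 0).mulVec (Uᵀ (Sum.inl j)))
    (hdecomp : Matrix.fromBlocks A B B (-A) =
      U * Matrix.fromBlocks (Matrix.diagonal θ) 0 0 (-(Matrix.diagonal θ)) * Uᵀ) :
    Matrix.fromBlocks B (-A) (-A) (-B) =
      U * Matrix.fromBlocks 0 (-(Matrix.diagonal θ)) (-(Matrix.diagonal θ)) 0 * Uᵀ := by
  set J : Matrix (Fin n ⊕ Fin n) (Fin n ⊕ Fin n) ℝ :=
    Matrix.fromBlocks 0 (-1) 1 0 with hJdef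
  have key : ∀ (i : Fin n ⊕ Fin n) (j : Fin n),
      U i (Sum.inr j) = (J * U) i (Sum.inl j) := by
    intro i j
    have h := congrFun (hcol j) i
    simpa [Matrix.mulVec, Matrix.mul_apply, dotProduct, Matrix.transpose_apply,
      mul_comm] using h
  have hJJ : J * J = -1 := by
    rw [hJdef, Matrix.fromBlocks_multiply, ← Matrix.fromBlocks_one, Matrix.fromBlocks_neg]
    simp
  have hJU : J * U = U * J := by
    ext i k
    rcases k with j | j
    · rw [← key i j]
      rw [hJdef]
      simp [Matrix.mul_apply, Fintype.sum_sum_type, Matrix.fromBlocks_apply₁₁,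
        Matrix.fromBlocks_apply₁₂, Matrix.fromBlocks_apply₂₁, Matrix.fromBlocks_apply₂₂,
        Matrix.one_apply, mul_ite]
    · have h1 : (J * U) i (Sum.inr j) = (J * (J * U)) i (Sum.inl j) := by
        simp only [Matrix.mul_apply]
        congr 1
        funext m
        rw [key m j]
        simp [Matrix.mul_apply]
      rw [h1, ← Matrix.mul_assoc, hJJ]
      rw [hJdef]
      simp [Matrix.mul_apply, Fintype.sum_sum_type, Matrix.one_apply, mul_ite]
  have hUJ : Uᵀ * J = J * Uᵀ := by
    have := congrArg Matrix.transpose hJU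
    simp only [Matrix.transpose_mul] at this
    have hJT : Jᵀ = -J := by
      rw [hJdef, Matrix.fromBlocks_transpose, Matrix.fromBlocks_neg]
      simp
    rw [hJT] at this
    simp only [Matrix.neg_mul, Matrix.mul_neg] at this
    exact neg_inj.mp this
  have hMJ : Matrix.fromBlocks A B B (-A) * J = Matrix.fromBlocks B (-A) (-A) (-B) := by
    rw [hJdef]
    simp [Matrix.fromBlocks_multiply]
  have hDJ : Matrix.fromBlocks (Matrix.diagonal θ) 0 0 (-(Matrix.diagonal θ)) * J =
      Matrix.fromBlocks 0 (-(Matrix.diagonal θ)) (-(Matrix.diagonal θ)) 0 := by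
    rw [hJdef, Matrix.fromBlocks_multiply]
    simp only [Matrix.mul_zero, Matrix.zero_mul, Matrix.mul_one, Matrix.mul_neg,
      Matrix.neg_mul, Matrix.one_mul, add_zero, zero_add, neg_zero, neg_neg]
  calc Matrix.fromBlocks B (-A) (-A) (-B)
      = Matrix.fromBlocks A B B (-A) * J := hMJ.symm
    _ = U * Matrix.fromBlocks (Matrix.diagonal θ) 0 0 (-(Matrix.diagonal θ)) * Uᵀ * J := by
        rw [hdecomp]
    _ = U * Matrix.fromBlocks (Matrix.diagonal θ) 0 0 (-(Matrix.diagonal θ)) * (Uᵀ * J) := by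
        rw [Matrix.mul_assoc]
    _ = U * Matrix.fromBlocks (Matrix.diagonal θ) 0 0 (-(Matrix.diagonal θ)) * (J * Uᵀ) := by
        rw [hUJ]
    _ = U * (Matrix.fromBlocks (Matrix.diagonal θ) 0 0 (-(Matrix.diagonal θ)) * J) * Uᵀ := by
        rw [Matrix.mul_assoc, Matrix.mul_assoc, Matrix.mul_assoc]
    _ = U * Matrix.fromBlocks 0 (-(Matrix.diagonal θ)) (-(Matrix.diagonal θ)) 0 * Uᵀ := by
        rw [hDJ]
end

section
/- Let (A,B) with A ∈ ℝ^{n×n}, B ∈ ℝ^{n×m} be controllable, i.e., rank [B, AB, …, A^{n-1}B] = n. Let B = Q₁R be a QR decomposition with Q = [Q₁ Q₂] orthogonal, Q₁ ∈ ℝ^{n×m}, Q₂ ∈ ℝ^{n×(n-m)}, and R ∈ ℝ^{m×m} nonsingular. Then for every λ ∈ ℂ, the matrix M₁ = Q₂ᵀ(A - λIₙ) ∈ ℂ^{(n-m)×n} has full row rank n - m; equivalently, the null space of M₁ has dimension m. -/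
/-!
If `vᵀ Q₂ᵀ (A - λI) = 0`, then `w = Q₂ v` is a left eigenvector of `A`, and `wᵀ B = wᵀ Q₁ R = 0`
because the columns of `Q₂` are orthogonal to those of `Q₁`. Hence `wᵀ A^k B = λ^k wᵀ B = 0` for
all `k`, so the real and imaginary parts of `w` are annihilated by the real controllability
matrix, which has full row rank; thus `w = 0`, and `v = Q₂ᵀ Q₂ v = Q₂ᵀ w = 0`.
-/

open Matrix

namespace Matrix

section Rank

variable {K ι : Type*} [Field K] [Fintype ι]

theorem eq_zero_of_vecMul_eq_zero_of_rank_eq {n : ℕ} {M : Matrix (Fin n) ι K} (hM : M.rank = n)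
    {v : Fin n → K} (hv : v ᵥ* M = 0) : v = 0 := by
  have hker : Module.finrank K (LinearMap.ker Mᵀ.mulVecLin) = 0 := by
    have := LinearMap.finrank_range_add_finrank_ker Mᵀ.mulVecLin
    rw [← rank, rank_transpose, hM, Module.finrank_fin_fun] at this
    omega
  have hv' : v ∈ LinearMap.ker Mᵀ.mulVecLin := by
    rwa [LinearMap.mem_ker, mulVecLin_apply, ← vecMul_transpose, transpose_transpose]
  rwa [Submodule.finrank_eq_zero.mp hker, Submodule.mem_bot] at hv'

theorem rank_eq_of_vecMul_eq_zero {p : ℕ} (M : Matrix (Fin p) ι K)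
    (hM : ∀ v : Fin p → K, v ᵥ* M = 0 → v = 0) : M.rank = p := by
  have hinj : Function.Injective Mᵀ.mulVecLin := by
    rw [← LinearMap.ker_eq_bot, LinearMap.ker_eq_bot']
    intro v hv
    exact hM v (by rwa [mulVecLin_apply, ← vecMul_transpose, transpose_transpose] at hv)
  rw [← rank_transpose, rank, LinearMap.finrank_range_of_inj hinj, Module.finrank_fin_fun]

end Rank

theorem eq_zero_of_vecMul_map_ofReal_eq_zero {ι : Type*} [Fintype ι] {n : ℕ}
    {M : Matrix (Fin n) ι ℝ} (hM : M.rank = n) {w : Fin n → ℂ}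
    (hw : w ᵥ* M.map Complex.ofReal = 0) : w = 0 := by
  have hre : (fun i => (w i).re) ᵥ* M = 0 := by
    funext j
    simpa [vecMul, dotProduct, Complex.re_sum] using congrArg Complex.re (congrFun hw j)
  have him : (fun i => (w i).im) ᵥ* M = 0 := by
    funext j
    simpa [vecMul, dotProduct, Complex.im_sum] using congrArg Complex.im (congrFun hw j)
  funext i
  exact Complex.ext (congrFun (eq_zero_of_vecMul_eq_zero_of_rank_eq hM hre) i)
    (congrFun (eq_zero_of_vecMul_eq_zero_of_rank_eq hM him) i)

end Matrix

section Controllability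

variable {R S κ : Type*} {n : ℕ}

/-- The matrix `[B, AB, …, A^{n-1}B]`. -/
def controllabilityMatrix [Semiring R] (A : Matrix (Fin n) (Fin n) R) (B : Matrix (Fin n) κ R) :
    Matrix (Fin n) (Fin n × κ) R :=
  Matrix.of fun i q => (A ^ (q.1 : ℕ) * B) i q.2

theorem controllabilityMatrix_map [Semiring R] [Semiring S] (f : R →+* S)
    (A : Matrix (Fin n) (Fin n) R) (B : Matrix (Fin n) κ R) :
    (controllabilityMatrix A B).map f = controllabilityMatrix (A.map f) (B.map f) := by
  ext i q
  rw [map_apply, controllabilityMatrix, controllabilityMatrix, of_apply, of_apply,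
    RingHom.map_matrix_mul, Matrix.map_pow]

theorem vecMul_pow_of_vecMul_eq_smul [CommSemiring R] {A : Matrix (Fin n) (Fin n) R}
    {w : Fin n → R} {c : R} (hw : w ᵥ* A = c • w) (k : ℕ) : w ᵥ* A ^ k = c ^ k • w := by
  induction k with
  | zero => simp
  | succ k ih => rw [pow_succ, ← vecMul_vecMul, ih, smul_vecMul, hw, smul_smul, pow_succ]

theorem vecMul_controllabilityMatrix_eq_zero [CommSemiring R] {A : Matrix (Fin n) (Fin n) R}
    {B : Matrix (Fin n) κ R} {w : Fin n → R} {c : R} (hA : w ᵥ* A = c • w) (hB : w ᵥ* B = 0) :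
    w ᵥ* controllabilityMatrix A B = 0 := by
  funext q
  have hcol : w ᵥ* (A ^ (q.1 : ℕ) * B) = 0 := by
    rw [← vecMul_vecMul, vecMul_pow_of_vecMul_eq_smul hA, smul_vecMul, hB, smul_zero]
  exact congrFun hcol q.2

/-- One direction of the Popov–Belevitch–Hautus eigenvector test, over `ℂ` for a real pair. -/
theorem eq_zero_of_rank_controllabilityMatrix_eq [Fintype κ] {A : Matrix (Fin n) (Fin n) ℝ}
    {B : Matrix (Fin n) κ ℝ} (hAB : (controllabilityMatrix A B).rank = n) {w : Fin n → ℂ}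
    {c : ℂ} (hA : w ᵥ* A.map Complex.ofReal = c • w) (hB : w ᵥ* B.map Complex.ofReal = 0) :
    w = 0 := by
  refine Matrix.eq_zero_of_vecMul_map_ofReal_eq_zero hAB ?_
  change w ᵥ* (controllabilityMatrix A B).map Complex.ofRealHom = 0
  rw [controllabilityMatrix_map]
  exact vecMul_controllabilityMatrix_eq_zero hA hB

end Controllability

theorem stmt4_general (n m p : ℕ)
    (A : Matrix (Fin n) (Fin n) ℝ) (B : Matrix (Fin n) (Fin m) ℝ)
    (hctrb : (Matrix.of fun (i : Fin n) (q : Fin n × Fin m) =>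
      (A ^ (q.1 : ℕ) * B) i q.2).rank = n)
    (Q₁ : Matrix (Fin n) (Fin m) ℝ) (Q₂ : Matrix (Fin n) (Fin p) ℝ)
    (R : Matrix (Fin m) (Fin m) ℝ)
    (hQ : (Matrix.fromCols Q₁ Q₂)ᵀ * Matrix.fromCols Q₁ Q₂ = 1)
    (hB : B = Q₁ * R) (lam : ℂ) :
    ((Q₂.map Complex.ofReal)ᵀ * (A.map Complex.ofReal - lam • 1)).rank = p := by
  rw [transpose_fromCols, fromRows_mul_fromCols, ← fromBlocks_one, fromBlocks_inj] at hQ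
  obtain ⟨-, -, hQ₂₁, hQ₂₂⟩ := hQ
  have hmap {k l o : ℕ} (M : Matrix (Fin k) (Fin l) ℝ) (N : Matrix (Fin l) (Fin o) ℝ) :
      (M * N).map Complex.ofReal = M.map Complex.ofReal * N.map Complex.ofReal :=
    Matrix.map_mul (f := Complex.ofRealHom)
  refine rank_eq_of_vecMul_eq_zero _ fun v hv => ?_
  set w := Q₂.map Complex.ofReal *ᵥ v with hw_def
  have hwA : w ᵥ* A.map Complex.ofReal = lam • w := by
    rw [← vecMul_vecMul, vecMul_transpose, vecMul_sub, sub_eq_zero, vecMul_smul, vecMul_one] at hv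
    exact hv
  have hwB : w ᵥ* B.map Complex.ofReal = 0 := by
    rw [hB, hmap, ← vecMul_vecMul, hw_def, ← vecMul_transpose, vecMul_vecMul v, ← transpose_map,
      ← hmap, hQ₂₁, Matrix.map_zero _ Complex.ofReal_zero, vecMul_zero, zero_vecMul]
  have hw : w = 0 := eq_zero_of_rank_controllabilityMatrix_eq hctrb hwA hwB
  calc v = ((Q₂ᵀ * Q₂).map Complex.ofReal) *ᵥ v := by
        rw [hQ₂₂, Matrix.map_one _ Complex.ofReal_zero Complex.ofReal_one, one_mulVec]
    _ = 0 := by rw [hmap, transpose_map, ← mulVec_mulVec, ← hw_def, hw, mulVec_zero]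

/-- If `(A,B)` is controllable and the columns of `Q₂` span the orthogonal complement of
the range of `B = Q₁R`, then `Q₂ᵀ(A - λI)` has full row rank for every `λ ∈ ℂ`. -/
theorem stmt4 (n m p : ℕ) (hmp : m + p = n)
    (A : Matrix (Fin n) (Fin n) ℝ) (B : Matrix (Fin n) (Fin m) ℝ)
    (hctrb : (Matrix.of fun (i : Fin n) (q : Fin n × Fin m) =>
      (A ^ (q.1 : ℕ) * B) i q.2).rank = n)
    (Q₁ : Matrix (Fin n) (Fin m) ℝ) (Q₂ : Matrix (Fin n) (Fin p) ℝ)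
    (R : Matrix (Fin m) (Fin m) ℝ) (hR : IsUnit R.det)
    (hQ : (Matrix.fromCols Q₁ Q₂)ᵀ * Matrix.fromCols Q₁ Q₂ = 1)
    (hB : B = Q₁ * R) (lam : ℂ) :
    ((Q₂.map Complex.ofReal)ᵀ * (A.map Complex.ofReal - lam • 1)).rank = p :=
  stmt4_general n m p A B hctrb Q₁ Q₂ R hQ hB lam
end

section
/- Let (A,B) be controllable with B = Q₁R of full column rank (Q = [Q₁ Q₂] orthogonal). Suppose X_k ∈ ℝ^{n×k} has orthonormal columns and T_k ∈ ℝ^{k×k} satisfies Q₂ᵀ A X_k = Q₂ᵀ X_k T_k, with k < n. Then for any λ ∈ ℝ, the matrix M = [[Q₂ᵀ(A - λIₙ), -Q₂ᵀX_k],[X_kᵀ, 0]] ∈ ℝ^{(n-m+k)×(n+k)} has full row rank; equivalently, dim N(M) = m. -/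
/-!
Let `(u, v)` be a left null vector of `M` and `w = Q₂ u`. The second block column says
`wᵀ X = 0`. Multiplying the first block row on the right by `X` and using the invariance
`Q₂ᵀ A X = Q₂ᵀ X T` kills the `w` terms and leaves `vᵀ Xᵀ X = vᵀ`, so `v = 0`. Then the first
block row says that `w` is a left eigenvector of `A` for `λ`, and `wᵀ B = uᵀ Q₂ᵀ Q₁ R = 0`, so the
Popov–Belevitch–Hautus test for the controllable pair `(A, B)` forces `w = 0`, whence
`u = Q₂ᵀ w = 0`. Thus the rows of `M` are linearly independent.
-/

open Matrix

namespace Matrix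

theorem rank_eq_card_iff_forall_vecMul_eq_zero {K m n : Type*} [Field K] [Fintype m] [Fintype n]
    {M : Matrix m n K} : M.rank = Fintype.card m ↔ ∀ v : m → K, v ᵥ* M = 0 → v = 0 := by
  rw [rank_eq_finrank_span_row, ← Set.finrank, eq_comm,
    ← linearIndependent_iff_card_eq_finrank_span, ← vecMul_injective_iff, ← coe_vecMulLinear,
    injective_iff_map_eq_zero]
  rfl

/-- `[B, AB, …, A^{n-1}B]`, its columns indexed by pairs `(j, i)`. -/
def controllabilityMatrix {K ι : Type*} [Semiring K] {n : ℕ} (A : Matrix (Fin n) (Fin n) K)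
    (B : Matrix (Fin n) ι K) : Matrix (Fin n) (Fin n × ι) K :=
  of fun i q => (A ^ (q.1 : ℕ) * B) i q.2

theorem vecMul_pow_of_vecMul_eq_smul {R n : Type*} [CommSemiring R] [Fintype n] [DecidableEq n]
    {A : Matrix n n R} {w : n → R} {μ : R} (hw : w ᵥ* A = μ • w) (j : ℕ) :
    w ᵥ* A ^ j = μ ^ j • w := by
  induction j with
  | zero => simp
  | succ j ih => rw [pow_succ, ← vecMul_vecMul, ih, smul_vecMul, hw, smul_smul, pow_succ]

/-- The Popov–Belevitch–Hautus test. -/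
theorem eq_zero_of_vecMul_eq_smul_of_vecMul_eq_zero {K ι : Type*} [Field K] [Fintype ι] {n : ℕ}
    {A : Matrix (Fin n) (Fin n) K} {B : Matrix (Fin n) ι K}
    (hAB : (controllabilityMatrix A B).rank = n) {w : Fin n → K} {μ : K}
    (hA : w ᵥ* A = μ • w) (hB : w ᵥ* B = 0) : w = 0 := by
  refine rank_eq_card_iff_forall_vecMul_eq_zero.mp (hAB.trans (Fintype.card_fin n).symm) w
    (funext fun q => ?_)
  have hq : w ᵥ* (A ^ (q.1 : ℕ) * B) = 0 := by
    rw [← vecMul_vecMul, vecMul_pow_of_vecMul_eq_smul hA, smul_vecMul, hB, smul_zero]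
  exact congrFun hq q.2

theorem vecMul_fromBlocks_eq_zero {R n p k : Type*} [CommRing R] [Fintype n] [DecidableEq n]
    [Fintype p] [Fintype k] [DecidableEq k] {A : Matrix n n R} {P : Matrix p n R}
    {X : Matrix n k R} {T : Matrix k k R} {lam : R} (hX : Xᵀ * X = 1)
    (hT : P * A * X = P * X * T) {u : p → R} {v : k → R}
    (h : Sum.elim u v ᵥ* fromBlocks (P * (A - lam • 1)) (-(P * X)) Xᵀ 0 = 0) :
    v = 0 ∧ (u ᵥ* P) ᵥ* A = lam • (u ᵥ* P) := by
  rw [vecMul_fromBlocks, Sum.elim_comp_inl, Sum.elim_comp_inr, ← Sum.elim_zero_zero,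
    Sum.elim_eq_iff] at h
  obtain ⟨h₁, h₂⟩ := h
  set w := u ᵥ* P
  have hwX : w ᵥ* X = 0 := by
    rw [vecMul_vecMul]
    simpa only [vecMul_neg, vecMul_zero, add_zero, neg_eq_zero] using h₂
  have hwAX : (w ᵥ* A) ᵥ* X = 0 := by
    rw [vecMul_vecMul, vecMul_vecMul, ← Matrix.mul_assoc, hT, ← vecMul_vecMul, ← vecMul_vecMul,
      hwX, zero_vecMul]
  have h₁' : w ᵥ* A - lam • w + v ᵥ* Xᵀ = 0 := by
    rwa [← vecMul_vecMul, vecMul_sub, vecMul_smul, vecMul_one] at h₁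
  have hv : v = 0 := by
    simpa only [add_vecMul, sub_vecMul, smul_vecMul, hwAX, hwX, vecMul_vecMul, hX, vecMul_one,
      smul_zero, sub_zero, zero_add, zero_vecMul] using congrArg (· ᵥ* X) h₁'
  refine ⟨hv, ?_⟩
  rwa [hv, zero_vecMul, add_zero, sub_eq_zero] at h₁'

end Matrix

theorem stmt5_general (n m p k : ℕ)
    (A : Matrix (Fin n) (Fin n) ℝ) (B : Matrix (Fin n) (Fin m) ℝ)
    (hctrb : (Matrix.of fun (i : Fin n) (q : Fin n × Fin m) =>
      (A ^ (q.1 : ℕ) * B) i q.2).rank = n)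
    (Q₁ : Matrix (Fin n) (Fin m) ℝ) (Q₂ : Matrix (Fin n) (Fin p) ℝ)
    (R : Matrix (Fin m) (Fin m) ℝ)
    (hQ : (Matrix.fromCols Q₁ Q₂)ᵀ * Matrix.fromCols Q₁ Q₂ = 1)
    (hB : B = Q₁ * R)
    (X : Matrix (Fin n) (Fin k) ℝ) (hX : Xᵀ * X = 1)
    (T : Matrix (Fin k) (Fin k) ℝ) (hT : Q₂ᵀ * A * X = Q₂ᵀ * X * T)
    (lam : ℝ) :
    (Matrix.fromBlocks (Q₂ᵀ * (A - lam • 1)) (-(Q₂ᵀ * X)) Xᵀ 0).rank = p + k := by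
  rw [transpose_fromCols, fromRows_mul_fromCols, ← fromBlocks_one] at hQ
  obtain ⟨-, -, hQ₂₁, hQ₂₂⟩ := fromBlocks_inj.mp hQ
  have hcard : Fintype.card (Fin p ⊕ Fin k) = p + k := by simp
  rw [← hcard, rank_eq_card_iff_forall_vecMul_eq_zero]
  intro y hy
  obtain ⟨u, v, rfl⟩ : ∃ u v, y = Sum.elim u v := ⟨_, _, (Sum.elim_comp_inl_inr y).symm⟩
  obtain ⟨hv, heig⟩ := vecMul_fromBlocks_eq_zero hX hT hy
  have hw : u ᵥ* Q₂ᵀ = 0 := by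
    refine eq_zero_of_vecMul_eq_smul_of_vecMul_eq_zero hctrb heig ?_
    rw [hB, vecMul_vecMul, ← Matrix.mul_assoc, hQ₂₁, Matrix.zero_mul, vecMul_zero]
  have hu : u = 0 := by
    rw [← vecMul_one u, ← hQ₂₂, ← vecMul_vecMul, hw, zero_vecMul]
  rw [hu, hv, Sum.elim_zero_zero]

/-- Full row rank of the bordered matrix `M = [[Q₂ᵀ(A-λI), -Q₂ᵀX_k],[X_kᵀ, 0]]`. -/
theorem stmt5 (n m p k : ℕ) (hmp : m + p = n) (hk : k < n)
    (A : Matrix (Fin n) (Fin n) ℝ) (B : Matrix (Fin n) (Fin m) ℝ)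
    (hctrb : (Matrix.of fun (i : Fin n) (q : Fin n × Fin m) =>
      (A ^ (q.1 : ℕ) * B) i q.2).rank = n)
    (Q₁ : Matrix (Fin n) (Fin m) ℝ) (Q₂ : Matrix (Fin n) (Fin p) ℝ)
    (R : Matrix (Fin m) (Fin m) ℝ) (hR : IsUnit R.det)
    (hQ : (Matrix.fromCols Q₁ Q₂)ᵀ * Matrix.fromCols Q₁ Q₂ = 1)
    (hB : B = Q₁ * R)
    (X : Matrix (Fin n) (Fin k) ℝ) (hX : Xᵀ * X = 1)
    (T : Matrix (Fin k) (Fin k) ℝ) (hT : Q₂ᵀ * A * X = Q₂ᵀ * X * T)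
    (lam : ℝ) :
    (Matrix.fromBlocks (Q₂ᵀ * (A - lam • 1)) (-(Q₂ᵀ * X)) Xᵀ 0).rank = p + k :=
  stmt5_general n m p k A B hctrb Q₁ Q₂ R hQ hB X hX T hT lam
end

section
/- Let A ∈ ℝ^{n×n}, B ∈ ℝ^{n×m} with B = Q₁R of full column rank, where Q = [Q₁ Q₂] is orthogonal and R is nonsingular upper triangular. Suppose X ∈ ℝ^{n×n} is orthogonal and T ∈ ℝ^{n×n} satisfies Q₂ᵀ(AX - XT) = 0. Then F = R⁻¹Q₁ᵀ(XTXᵀ - A) satisfies A + BF = XTXᵀ. In particular, the eigenvalues of A + BF are exactly the eigenvalues of T. -/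
/-!
Since `BR⁻¹ = Q₁`, the feedback term `BF` is `Q₁Q₁ᵀ(XTXᵀ - A)`, and `Q₁Q₁ᵀ = 1 - Q₂Q₂ᵀ` acts as
the identity on `XTXᵀ - A` because the hypothesis `Q₂ᵀ(AX - XT) = 0` means exactly
`Q₂ᵀ(XTXᵀ - A) = 0`. Hence `A + BF = XTXᵀ`, which is similar to `T`.
-/

open Matrix

namespace Matrix

variable {l m n p R : Type*}

theorem mul_transpose_mul_of_transpose_mul_eq_zero [Fintype m] [Fintype n] [Fintype p]
    [DecidableEq n] [Semiring R]
    {Q₁ : Matrix n m R} {Q₂ : Matrix n p R} (hQ : Q₁ * Q₁ᵀ + Q₂ * Q₂ᵀ = 1)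
    {M : Matrix n l R} (hM : Q₂ᵀ * M = 0) : Q₁ * Q₁ᵀ * M = M := by
  calc Q₁ * Q₁ᵀ * M = (Q₁ * Q₁ᵀ + Q₂ * Q₂ᵀ) * M := by
        rw [Matrix.add_mul, Matrix.mul_assoc Q₂, hM, Matrix.mul_zero, add_zero]
    _ = M := by rw [hQ, Matrix.one_mul]

theorem mul_mul_mul_sub_eq_zero_of_mul_mul_sub_eq_zero [Fintype n] [DecidableEq n] [Ring R]
    {C : Matrix m n R} {A X T Y : Matrix n n R} (hXY : X * Y = 1)
    (h : C * (A * X - X * T) = 0) : C * (X * T * Y - A) = 0 := by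
  have hA : A = A * X * Y := by rw [Matrix.mul_assoc, hXY, Matrix.mul_one]
  calc C * (X * T * Y - A) = -(C * (A * X - X * T) * Y) := by
        conv_lhs => rw [hA]
        simp only [Matrix.mul_sub, Matrix.sub_mul, Matrix.mul_assoc, neg_sub]
    _ = 0 := by rw [h, Matrix.zero_mul, neg_zero]

theorem charpoly_mul_mul_of_mul_eq_one [Fintype n] [DecidableEq n] [CommRing R]
    {X Y : Matrix n n R} (hXY : X * Y = 1) (T : Matrix n n R) :
    (X * T * Y).charpoly = T.charpoly := by
  rw [Matrix.mul_assoc, charpoly_mul_comm, Matrix.mul_assoc, mul_eq_one_comm.mp hXY,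
    Matrix.mul_one]

end Matrix

theorem stmt16_general (n m p : ℕ)
    (A : Matrix (Fin n) (Fin n) ℝ) (B : Matrix (Fin n) (Fin m) ℝ)
    (Q₁ : Matrix (Fin n) (Fin m) ℝ) (Q₂ : Matrix (Fin n) (Fin p) ℝ)
    (R : Matrix (Fin m) (Fin m) ℝ) (hR : IsUnit R.det)
    (hQ' : Matrix.fromCols Q₁ Q₂ * (Matrix.fromCols Q₁ Q₂)ᵀ = 1)
    (hB : B = Q₁ * R)
    (X T : Matrix (Fin n) (Fin n) ℝ) (hX' : X * Xᵀ = 1)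
    (hXT : Q₂ᵀ * (A * X - X * T) = 0) :
    A + B * (R⁻¹ * Q₁ᵀ * (X * T * Xᵀ - A)) = X * T * Xᵀ ∧
    (A + B * (R⁻¹ * Q₁ᵀ * (X * T * Xᵀ - A))).charpoly = T.charpoly := by
  have hQ : Q₁ * Q₁ᵀ + Q₂ * Q₂ᵀ = 1 := by
    rwa [transpose_fromCols, fromCols_mul_fromRows] at hQ'
  have hBR : B * R⁻¹ = Q₁ := by
    rw [hB, Matrix.mul_assoc, mul_nonsing_inv _ hR, Matrix.mul_one]
  have hclosed : A + B * (R⁻¹ * Q₁ᵀ * (X * T * Xᵀ - A)) = X * T * Xᵀ := by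
    rw [← Matrix.mul_assoc B, ← Matrix.mul_assoc B, hBR,
      mul_transpose_mul_of_transpose_mul_eq_zero hQ
        (mul_mul_mul_sub_eq_zero_of_mul_mul_sub_eq_zero hX' hXT), add_sub_cancel]
  rw [hclosed]
  exact ⟨rfl, charpoly_mul_mul_of_mul_eq_one hX' T⟩

/-- The parametric feedback `F = R⁻¹Q₁ᵀ(XTXᵀ - A)` yields `A + BF = XTXᵀ`, so the
closed-loop matrix has the same characteristic polynomial (hence eigenvalues) as `T`. -/
theorem stmt16 (n m p : ℕ) (hmp : m + p = n)
    (A : Matrix (Fin n) (Fin n) ℝ) (B : Matrix (Fin n) (Fin m) ℝ)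
    (Q₁ : Matrix (Fin n) (Fin m) ℝ) (Q₂ : Matrix (Fin n) (Fin p) ℝ)
    (R : Matrix (Fin m) (Fin m) ℝ) (hR : IsUnit R.det)
    (hQ : (Matrix.fromCols Q₁ Q₂)ᵀ * Matrix.fromCols Q₁ Q₂ = 1)
    (hQ' : Matrix.fromCols Q₁ Q₂ * (Matrix.fromCols Q₁ Q₂)ᵀ = 1)
    (hB : B = Q₁ * R)
    (X T : Matrix (Fin n) (Fin n) ℝ) (hX : Xᵀ * X = 1) (hX' : X * Xᵀ = 1)
    (hXT : Q₂ᵀ * (A * X - X * T) = 0) :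
    A + B * (R⁻¹ * Q₁ᵀ * (X * T * Xᵀ - A)) = X * T * Xᵀ ∧
    (A + B * (R⁻¹ * Q₁ᵀ * (X * T * Xᵀ - A))).charpoly = T.charpoly :=
  stmt16_general n m p A B Q₁ Q₂ R hR hQ' hB X T hX' hXT
end

section
/- Let (A,B) be controllable with A ∈ ℝ^{n×n}, B ∈ ℝ^{n×m} of full column rank m, and let λ ∈ ℝ. If X_a ∈ ℝ^{n×a} with a ≤ m has orthonormal columns all lying in the null space of Q₂ᵀ(A - λIₙ) (where the columns of Q₂ span the orthogonal complement of range(B)), then for F = R⁻¹Q₁ᵀ(XTXᵀ - A) constructed with any orthogonal completion X = [X_a, X'] and any upper quasi-triangular T with T(1:a,1:a) = λI_a satisfying Q₂ᵀ(AX - XT) = 0, the geometric multiplicity of λ as an eigenvalue of A + BF is at least a. -/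
/-!
Since `B = Q₁R` and `Q₁Q₁ᵀ + Q₂Q₂ᵀ = 1`, the feedback `F = R⁻¹Q₁ᵀ(XTXᵀ - A)` gives
`A + BF = XTXᵀ - Q₂Q₂ᵀ(XTXᵀ - A)`, and `Q₂ᵀ(AX - XT) = 0` with `XXᵀ = 1` kills the last term.
The first `a` columns of `T` are `λ` times unit vectors, so the orthonormal columns `Xa` of `X`
are eigenvectors of `XTXᵀ` for `λ`; being linearly independent, they span an `a`-dimensional
subspace of the eigenspace.
-/

open Matrix

section

variable {K : Type*} [CommRing K]

theorem mul_transpose_mul_eq_self_of_transpose_mul_eq_zero {n m p k : Type*}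
    [Fintype n] [Fintype m] [Fintype p] [DecidableEq n] {Q₁ : Matrix n m K} {Q₂ : Matrix n p K}
    (hQ : fromCols Q₁ Q₂ * (fromCols Q₁ Q₂)ᵀ = 1) {M : Matrix n k K} (hM : Q₂ᵀ * M = 0) :
    Q₁ * (Q₁ᵀ * M) = M :=
  calc Q₁ * (Q₁ᵀ * M) = (Q₁ * Q₁ᵀ + Q₂ * Q₂ᵀ) * M := by
        rw [Matrix.add_mul, Matrix.mul_assoc, Matrix.mul_assoc Q₂, hM, Matrix.mul_zero, add_zero]
    _ = M := by rw [← fromCols_mul_fromRows, ← transpose_fromCols, hQ, Matrix.one_mul]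

theorem add_mul_nonsing_inv_mul_transpose_mul_sub_eq {n m p : Type*}
    [Fintype n] [Fintype m] [Fintype p] [DecidableEq n] [DecidableEq m]
    {Q₁ : Matrix n m K} {Q₂ : Matrix n p K} (hQ : fromCols Q₁ Q₂ * (fromCols Q₁ Q₂)ᵀ = 1)
    {C : Matrix m m K} (hC : IsUnit C.det) {A S : Matrix n n K} (hS : Q₂ᵀ * (S - A) = 0) :
    A + Q₁ * C * (C⁻¹ * Q₁ᵀ * (S - A)) = S := by
  rw [show Q₁ * C * (C⁻¹ * Q₁ᵀ * (S - A)) = Q₁ * (C * C⁻¹) * (Q₁ᵀ * (S - A)) by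
      simp only [Matrix.mul_assoc],
    mul_nonsing_inv C hC, Matrix.mul_one,
    mul_transpose_mul_eq_self_of_transpose_mul_eq_zero hQ hS, add_sub_cancel]

theorem mul_conj_sub_eq_zero_of_mul_sub_mul_eq_zero {n k : Type*} [Fintype n] [DecidableEq n]
    {P : Matrix k n K} {A X T : Matrix n n K} (hX : X * Xᵀ = 1)
    (h : P * (A * X - X * T) = 0) : P * (X * T * Xᵀ - A) = 0 := by
  have hres : X * T * Xᵀ - A = -((A * X - X * T) * Xᵀ) := by
    rw [Matrix.sub_mul, Matrix.mul_assoc A, hX, Matrix.mul_one, neg_sub]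
  rw [hres, Matrix.mul_neg, ← Matrix.mul_assoc, h, Matrix.zero_mul, neg_zero]

theorem conj_mul_submatrix_eq_smul {n ι : Type*} [Fintype n] [DecidableEq n]
    {X T : Matrix n n K} (hX : Xᵀ * X = 1) {f : ι → n} {c : K}
    (hT : T.submatrix id f = c • (1 : Matrix n n K).submatrix id f) :
    X * T * Xᵀ * X.submatrix id f = c • X.submatrix id f := by
  have hcol : ∀ M N : Matrix n n K, M * N.submatrix id f = (M * N).submatrix id f := fun M N => by
    rw [submatrix_mul M N id id f Function.bijective_id, submatrix_id_id]
  rw [hcol, Matrix.mul_assoc _ Xᵀ, hX, Matrix.mul_one, ← hcol, hT, Matrix.mul_smul, hcol,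
    Matrix.mul_one]

end

theorem card_le_finrank_ker_mulVecLin {F n ι : Type*} [Field F] [Fintype n] [Fintype ι]
    [DecidableEq ι] {M : Matrix n n F} {Y : Matrix n ι F} {L : Matrix ι n F} (hL : L * Y = 1)
    (hMY : M * Y = 0) : Fintype.card ι ≤ Module.finrank F (LinearMap.ker M.mulVecLin) := by
  have hinj : Function.Injective Y.mulVecLin := fun u v huv => by
    simpa [mulVec_mulVec, hL] using congrArg L.mulVec huv
  have hrange : LinearMap.range Y.mulVecLin ≤ LinearMap.ker M.mulVecLin := by
    rintro _ ⟨u, rfl⟩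
    simp [mulVec_mulVec, hMY]
  calc Fintype.card ι = Module.finrank F (LinearMap.range Y.mulVecLin) := by
        rw [LinearMap.finrank_range_of_inj hinj, Module.finrank_fintype_fun_eq_card]
    _ ≤ _ := Submodule.finrank_mono hrange

theorem stmt19_general (n m p a : ℕ) (han : a ≤ n)
    (A : Matrix (Fin n) (Fin n) ℝ) (B : Matrix (Fin n) (Fin m) ℝ)
    (Q₁ : Matrix (Fin n) (Fin m) ℝ) (Q₂ : Matrix (Fin n) (Fin p) ℝ)
    (R : Matrix (Fin m) (Fin m) ℝ) (hR : IsUnit R.det)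
    (hQ' : Matrix.fromCols Q₁ Q₂ * (Matrix.fromCols Q₁ Q₂)ᵀ = 1)
    (hB : B = Q₁ * R)
    (lam : ℝ)
    (Xa : Matrix (Fin n) (Fin a) ℝ) (hXa : Xaᵀ * Xa = 1)
    (X T : Matrix (Fin n) (Fin n) ℝ) (hX : Xᵀ * X = 1) (hX' : X * Xᵀ = 1)
    (hXfirst : ∀ (i : Fin n) (j : Fin a), X i (Fin.castLE han j) = Xa i j)
    (hTfirst : ∀ (i : Fin n) (j : Fin a),
      T i (Fin.castLE han j) = if i = Fin.castLE han j then lam else 0)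
    (hXT : Q₂ᵀ * (A * X - X * T) = 0) :
    a ≤ Module.finrank ℝ
      (LinearMap.ker
        (A + B * (R⁻¹ * Q₁ᵀ * (X * T * Xᵀ - A)) -
          lam • (1 : Matrix (Fin n) (Fin n) ℝ)).mulVecLin) := by
  have hclosed : A + B * (R⁻¹ * Q₁ᵀ * (X * T * Xᵀ - A)) = X * T * Xᵀ :=
    hB ▸ add_mul_nonsing_inv_mul_transpose_mul_sub_eq hQ' hR
      (mul_conj_sub_eq_zero_of_mul_sub_mul_eq_zero hX' hXT)
  have hXa_cols : Xa = X.submatrix id (Fin.castLE han) := by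
    ext i j
    exact (hXfirst i j).symm
  have hT_cols : T.submatrix id (Fin.castLE han) =
      lam • (1 : Matrix (Fin n) (Fin n) ℝ).submatrix id (Fin.castLE han) := by
    ext i j
    simp [hTfirst, one_apply]
  have hker : (X * T * Xᵀ - lam • 1) * Xa = 0 := by
    rw [Matrix.sub_mul, Matrix.smul_mul, Matrix.one_mul, hXa_cols,
      conj_mul_submatrix_eq_smul hX hT_cols, sub_self]
  rw [hclosed]
  simpa using card_le_finrank_ker_mulVecLin hXa hker

/-- If the first `a ≤ m` columns of `X` are orthonormal vectors in the null space of
`Q₂ᵀ(A - λI)` and `T(1:a,1:a) = λI_a` (with zeros below/above in those columns), then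
`λ` has geometric multiplicity at least `a` as an eigenvalue of `A + BF`. -/
theorem stmt19 (n m p a : ℕ) (hmp : m + p = n) (ham : a ≤ m) (han : a ≤ n)
    (A : Matrix (Fin n) (Fin n) ℝ) (B : Matrix (Fin n) (Fin m) ℝ)
    (hctrb : (Matrix.of fun (i : Fin n) (q : Fin n × Fin m) =>
      (A ^ (q.1 : ℕ) * B) i q.2).rank = n)
    (Q₁ : Matrix (Fin n) (Fin m) ℝ) (Q₂ : Matrix (Fin n) (Fin p) ℝ)
    (R : Matrix (Fin m) (Fin m) ℝ) (hR : IsUnit R.det)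
    (hQ : (Matrix.fromCols Q₁ Q₂)ᵀ * Matrix.fromCols Q₁ Q₂ = 1)
    (hQ' : Matrix.fromCols Q₁ Q₂ * (Matrix.fromCols Q₁ Q₂)ᵀ = 1)
    (hB : B = Q₁ * R)
    (lam : ℝ)
    (Xa : Matrix (Fin n) (Fin a) ℝ) (hXa : Xaᵀ * Xa = 1)
    (hker : Q₂ᵀ * (A - lam • 1) * Xa = 0)
    (X T : Matrix (Fin n) (Fin n) ℝ) (hX : Xᵀ * X = 1) (hX' : X * Xᵀ = 1)
    (hXfirst : ∀ (i : Fin n) (j : Fin a), X i (Fin.castLE han j) = Xa i j)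
    (hTfirst : ∀ (i : Fin n) (j : Fin a),
      T i (Fin.castLE han j) = if i = Fin.castLE han j then lam else 0)
    (hXT : Q₂ᵀ * (A * X - X * T) = 0) :
    a ≤ Module.finrank ℝ
      (LinearMap.ker
        (A + B * (R⁻¹ * Q₁ᵀ * (X * T * Xᵀ - A)) -
          lam • (1 : Matrix (Fin n) (Fin n) ℝ)).mulVecLin) :=
  stmt19_general n m p a han A B Q₁ Q₂ R hR hQ' hB lam Xa hXa X T hX hX' hXfirst hTfirst hXT
end
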